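/- arXiv:2111.04869 — 3 statements merged into one kernel-verified Lean document; each statement's English description precedes it below -/
import Mathlib

section
/- Let G be an amply regular graph with parameters (n, d, α, β) satisfying either (a) girth 4, or (b) α ≥ 1 and α = β − 1, or (c) α = β > 1. Then diam(G) ≤ d. -/
open Finset SimpleGraph

variable {V : Type*} [Fintype V] [DecidableEq V]

/-- A graph is amply regular with parameters `(n, d, a, b)` if it is `d`-regular on `n`
vertices, adjacent vertices have exactly `a` common neighbors, and vertices at distance 2
have exactly `b` common neighbors. -/
def SimpleGraph.IsAmplyRegular (G : SimpleGraph V) [DecidableRel G.Adj]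
    (n d a b : ℕ) : Prop :=
  Fintype.card V = n ∧ G.IsRegularOfDegree d ∧
    (∀ x y, G.Adj x y → (G.neighborFinset x ∩ G.neighborFinset y).card = a) ∧
    (∀ x y, G.dist x y = 2 → (G.neighborFinset x ∩ G.neighborFinset y).card = b)

/-- The measure `μ_x^p` giving mass `p` to `x` and `(1-p)/deg x` to each neighbor of `x`. -/
noncomputable def muMeasure (G : SimpleGraph V) [DecidableRel G.Adj] (p : ℝ) (x : V) :
    V → ℝ :=
  fun v => if v = x then p else if G.Adj x v then (1 - p) / (G.degree x : ℝ) else 0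

/-- `pi` is a transport plan between `mu1` and `mu2`. -/
def IsTransportPlan (mu1 mu2 : V → ℝ) (pi : V → V → ℝ) : Prop :=
  (∀ u v, 0 ≤ pi u v) ∧ (∀ u, ∑ v, pi u v = mu1 u) ∧ (∀ v, ∑ u, pi u v = mu2 v)

/-- The 1-Wasserstein distance between two measures w.r.t. the graph distance. -/
noncomputable def W1 (G : SimpleGraph V) (mu1 mu2 : V → ℝ) : ℝ :=
  sInf {c : ℝ | ∃ pi, IsTransportPlan mu1 mu2 pi ∧
    c = ∑ u, ∑ v, (G.dist u v : ℝ) * pi u v}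

/-- The Lin-Lu-Yau curvature of an edge of a `d`-regular graph, via the idleness
`p = 1/(d+1)` formula of Bourne et al. -/
noncomputable def kappaLLY (G : SimpleGraph V) [DecidableRel G.Adj] (d : ℕ) (x y : V) :
    ℝ :=
  ((d + 1 : ℝ) / d) *
    (1 - W1 G (muMeasure G (1 / (d + 1 : ℝ)) x) (muMeasure G (1 / (d + 1 : ℝ)) y))

/-- `N_x = Γ(x) \ ({y} ∪ Γ(y))`. -/
def Nset (G : SimpleGraph V) [DecidableRel G.Adj] (x y : V) : Finset V :=
  G.neighborFinset x \ insert y (G.neighborFinset y)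

/-- `Δ_{xy} = Γ(x) ∩ Γ(y)`. -/
def Dset (G : SimpleGraph V) [DecidableRel G.Adj] (x y : V) : Finset V :=
  G.neighborFinset x ∩ G.neighborFinset y

lemma girth4_facts (G : SimpleGraph V) [DecidableRel G.Adj] {a b : ℕ}
    (ha : ∀ x y, G.Adj x y → (G.neighborFinset x ∩ G.neighborFinset y).card = a)
    (hbeta : ∀ x y, G.dist x y = 2 → (G.neighborFinset x ∩ G.neighborFinset y).card = b)
    (hg : G.girth = 4) : 2 ≤ b ∧ a ≤ b := by
  have hnacyc : ¬ G.IsAcyclic := by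
    intro hac
    rw [hac.girth_eq_zero] at hg
    omega
  have hegirth : G.egirth = 4 := by
    have hne : G.egirth ≠ ⊤ := egirth_eq_top.not.mpr hnacyc
    have := ENat.coe_toNat hne
    rw [← this]
    norm_cast
  -- no triangles
  have hT : ∀ x y z : V, G.Adj x y → G.Adj y z → G.Adj z x → False := by
    intro x y z hxy hyz hzx
    have hcyc3 : (Walk.cons hxy (Walk.cons hyz (Walk.cons hzx Walk.nil))).IsCycle := by
      have h1 := hxy.ne; have h2 := hyz.ne; have h3 := hzx.ne
      simp [Walk.isCycle_def, Walk.isTrail_def, Sym2.eq, Sym2.rel_iff']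
      aesop
    have h4 := le_egirth.mp (le_of_eq hegirth.symm) x _ hcyc3
    simp [Walk.length_cons] at h4
    norm_num at h4
  -- the 4-cycle
  obtain ⟨c0, w, hcyc, hlen⟩ := exists_girth_eq_length.mpr hnacyc
  rw [hg] at hlen
  -- decompose
  cases w with
  | nil => simp at hlen
  | cons h01 p1 =>
    cases p1 with
    | nil => simp at hlen
    | cons h12 p2 =>
      cases p2 with
      | nil => simp at hlen
      | cons h23 p3 =>
        cases p3 with
        | nil => simp at hlen
        | cons h34 p4 =>
          cases p4 with
          | cons h45 p5 => simp [Walk.length_cons] at hlen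
          | nil =>
            rename_i a1 a2 a3
            -- h01 : G.Adj c0 a1, h12 : G.Adj a1 a2, h23 : G.Adj a2 a3, h34 : G.Adj a3 c0
            have hnd := hcyc.2
            simp [Walk.support_cons] at hnd
            have hc0a2 : c0 ≠ a2 := by tauto
            have ha1a3 : a1 ≠ a3 := by tauto
            have hnadj : ¬ G.Adj c0 a2 := fun hadj => hT c0 a1 a2 h01 h12 hadj.symm
            have hdist : G.dist c0 a2 = 2 := by
              have hle : G.dist c0 a2 ≤ 2 := by
                have := G.dist_le (Walk.cons h01 (Walk.cons h12 Walk.nil))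
                simpa using this
              have hne0 : G.dist c0 a2 ≠ 0 := by
                rw [Ne, SimpleGraph.dist_eq_zero_iff_eq_or_not_reachable]
                push_neg
                exact ⟨hc0a2, ⟨Walk.cons h01 (Walk.cons h12 Walk.nil)⟩⟩
              have hne1 : G.dist c0 a2 ≠ 1 := by
                rw [Ne, SimpleGraph.dist_eq_one_iff_adj]; exact hnadj
              omega
            have hb2 : 2 ≤ b := by
              rw [← hbeta c0 a2 hdist]
              have hsub : {a1, a3} ⊆ G.neighborFinset c0 ∩ G.neighborFinset a2 := by
                intro t ht
                simp only [mem_insert, mem_singleton] at ht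
                rcases ht with rfl | rfl <;>
                  simp [mem_inter, mem_neighborFinset, h01, h12.symm, h34.symm, h23, h23.symm]
              calc 2 = ({a1, a3} : Finset V).card := by rw [card_insert_of_notMem (by simpa using ha1a3), card_singleton]
                _ ≤ _ := card_le_card hsub
            have ha0 : a = 0 := by
              rw [← ha c0 a1 h01]
              rw [card_eq_zero]
              ext z
              simp only [mem_inter, mem_neighborFinset, notMem_empty, iff_false, not_and]
              intro hz1 hz2
              exact hT c0 a1 z h01 hz2 hz1.symm
            exact ⟨hb2, by omega⟩

/-- Terwilliger-type step: along a geodesic from `x`, the "down-degree" increases. -/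
lemma step_lemma (G : SimpleGraph V) [DecidableRel G.Adj] {a b : ℕ}
    (hconn : G.Connected)
    (ha : ∀ x y, G.Adj x y → (G.neighborFinset x ∩ G.neighborFinset y).card = a)
    (hbeta : ∀ x y, G.dist x y = 2 → (G.neighborFinset x ∩ G.neighborFinset y).card = b)
    (hb2 : 2 ≤ b) (hab : a ≤ b)
    {x u v : V} (huv : G.Adj u v) (hu1 : 1 ≤ G.dist x u)
    (hd : G.dist x v = G.dist x u + 1) :
    ((G.neighborFinset u).filter (fun w => G.dist x w + 1 = G.dist x u)).card + 1 ≤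
      ((G.neighborFinset v).filter (fun w => G.dist x w + 1 = G.dist x v)).card := by
  set k := G.dist x u with hk
  set Cu := (G.neighborFinset u).filter (fun w => G.dist x w + 1 = G.dist x u) with hCu
  set Cv := (G.neighborFinset v).filter (fun w => G.dist x w + 1 = G.dist x v) with hCv
  have hCuSub : Cu ⊆ G.neighborFinset u := filter_subset _ _
  have hCvSub : Cv ⊆ G.neighborFinset v := filter_subset _ _
  have huCv : u ∈ Cv := by
    rw [hCv, mem_filter, mem_neighborFinset]
    exact ⟨huv.symm, by omega⟩
  -- facts about members of Cu
  have hCu_dist : ∀ w ∈ Cu, G.dist x w + 1 = k := by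
    intro w hw
    rw [hCu, mem_filter] at hw
    exact hw.2
  have hCu_adj : ∀ w ∈ Cu, G.Adj u w := by
    intro w hw
    exact (mem_neighborFinset _ _ _).mp (hCuSub hw)
  -- Step 1: for w ∈ Cu, the neighbors of w inside Cv are exactly the common
  -- neighbors of w and v, and there are exactly b of them.
  have step1 : ∀ w ∈ Cu, (G.neighborFinset w ∩ Cv).card = b := by
    intro w hw
    have hwdist := hCu_dist w hw
    have hwu := hCu_adj w hw
    have hwv2 : G.dist w v = 2 := by
      have hwableq : G.dist w v ≤ 2 := by
        have := G.dist_le (Walk.cons hwu.symm (Walk.cons huv Walk.nil))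
        simpa using this
      have hwne : w ≠ v := by
        intro h; rw [h] at hwdist; omega
      have hwnadj : ¬ G.Adj w v := by
        intro hadj
        have h1 : G.dist x v ≤ G.dist x w + G.dist w v := hconn.dist_triangle
        rw [SimpleGraph.dist_eq_one_iff_adj.mpr hadj] at h1
        omega
      have hne0 : G.dist w v ≠ 0 := by
        rw [Ne, SimpleGraph.dist_eq_zero_iff_eq_or_not_reachable]
        push_neg
        exact ⟨hwne, hconn w v⟩
      have hne1 : G.dist w v ≠ 1 := by
        rw [Ne, SimpleGraph.dist_eq_one_iff_adj]; exact hwnadj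
      omega
    have heq : G.neighborFinset w ∩ Cv = G.neighborFinset w ∩ G.neighborFinset v := by
      ext z
      simp only [mem_inter, mem_neighborFinset, hCv, mem_filter]
      constructor
      · rintro ⟨h1, h2, _⟩; exact ⟨h1, h2⟩
      · rintro ⟨h1, h2⟩
        refine ⟨h1, h2, ?_⟩
        have hle : G.dist x z ≤ G.dist x w + 1 := by
          have h3 : G.dist x z ≤ G.dist x w + G.dist w z := hconn.dist_triangle
          rw [SimpleGraph.dist_eq_one_iff_adj.mpr h1] at h3
          exact h3
        have hge : G.dist x v ≤ G.dist x z + 1 := by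
          have h3 : G.dist x v ≤ G.dist x z + G.dist z v := hconn.dist_triangle
          rw [SimpleGraph.dist_eq_one_iff_adj.mpr h2.symm] at h3
          exact h3
        omega
    rw [heq]
    exact hbeta w v hwv2
  -- Step 2: double counting
  have step2 : ∑ w ∈ Cu, (G.neighborFinset w ∩ Cv).card
      = ∑ z ∈ Cv, (G.neighborFinset z ∩ Cu).card := by
    have e1 : ∀ w, G.neighborFinset w ∩ Cv = Cv.filter (fun z => G.Adj w z) := by
      intro w; ext z; simp [mem_inter, mem_neighborFinset, mem_filter, and_comm]
    have e2 : ∀ z, G.neighborFinset z ∩ Cu = Cu.filter (fun w => G.Adj w z) := by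
      intro z; ext w
      simp only [mem_inter, mem_neighborFinset, mem_filter]
      constructor
      · rintro ⟨h1, h2⟩; exact ⟨h2, h1.symm⟩
      · rintro ⟨h1, h2⟩; exact ⟨h2.symm, h1⟩
    simp_rw [e1, e2, card_filter]
    exact Finset.sum_comm
  -- value at u
  have hval_u : (G.neighborFinset u ∩ Cu).card = Cu.card := by
    rw [Finset.inter_eq_right.mpr hCuSub]
  -- bound at other z
  have step3 : ∀ z ∈ Cv.erase u, (G.neighborFinset z ∩ Cu).card ≤ b - 1 := by
    intro z hz
    have hzu : z ≠ u := (Finset.mem_erase.mp hz).1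
    have hzCv := (Finset.mem_erase.mp hz).2
    have hzv : G.Adj v z := (mem_neighborFinset _ _ _).mp (hCvSub hzCv)
    have hsub : G.neighborFinset z ∩ Cu ⊆
        (G.neighborFinset z ∩ G.neighborFinset u).erase v := by
      intro w hw
      rw [mem_inter] at hw
      obtain ⟨hw1, hw2⟩ := hw
      rw [Finset.mem_erase, mem_inter]
      refine ⟨?_, hw1, (mem_neighborFinset _ _ _).mpr (hCu_adj w hw2)⟩
      intro hwv
      have := hCu_dist w hw2
      rw [hwv] at this
      omega
    have hvmem : v ∈ G.neighborFinset z ∩ G.neighborFinset u := by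
      rw [mem_inter, mem_neighborFinset, mem_neighborFinset]
      exact ⟨hzv.symm, huv⟩
    have hcardzu : (G.neighborFinset z ∩ G.neighborFinset u).card ≤ b := by
      by_cases hadj : G.Adj z u
      · rw [ha z u hadj]; exact hab
      · have hdzu : G.dist z u = 2 := by
          have hle : G.dist z u ≤ 2 := by
            have := G.dist_le (Walk.cons hzv.symm (Walk.cons huv.symm Walk.nil))
            simpa using this
          have hne0 : G.dist z u ≠ 0 := by
            rw [Ne, SimpleGraph.dist_eq_zero_iff_eq_or_not_reachable]
            push_neg
            exact ⟨hzu, hconn z u⟩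
          have hne1 : G.dist z u ≠ 1 := by
            rw [Ne, SimpleGraph.dist_eq_one_iff_adj]; exact hadj
          omega
        rw [hbeta z u hdzu]
    have h1 := card_le_card hsub
    rw [Finset.card_erase_of_mem hvmem] at h1
    omega
  -- combine
  have hsum_lower : b * Cu.card = ∑ w ∈ Cu, (G.neighborFinset w ∩ Cv).card := by
    rw [Finset.sum_congr rfl step1, Finset.sum_const, smul_eq_mul, mul_comm]
  have hsum_upper : ∑ z ∈ Cv, (G.neighborFinset z ∩ Cu).card
      ≤ Cu.card + (Cv.card - 1) * (b - 1) := by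
    rw [← Finset.add_sum_erase _ _ huCv, hval_u]
    have := Finset.sum_le_card_nsmul (Cv.erase u) _ (b-1) step3
    rw [Finset.card_erase_of_mem huCv] at this
    simpa [smul_eq_mul] using this
  have hmain : b * Cu.card ≤ Cu.card + (Cv.card - 1) * (b - 1) := by
    rw [hsum_lower, step2]; exact hsum_upper
  have hCv1 : 1 ≤ Cv.card := Finset.card_pos.mpr ⟨u, huCv⟩
  -- arithmetic
  obtain ⟨b', rfl⟩ : ∃ b', b = b' + 2 := ⟨b - 2, by omega⟩
  obtain ⟨m, hm⟩ : ∃ m, Cv.card = m + 1 := ⟨Cv.card - 1, by omega⟩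
  rw [hm] at hmain ⊢
  have hs1 : b' + 2 - 1 = b' + 1 := by omega
  rw [hs1] at hmain
  simp only [Nat.add_sub_cancel] at hmain
  have hm2 : (b' + 2) * Cu.card = (b' + 1) * Cu.card + Cu.card := by ring
  have hm3 : m * (b' + 1) = (b' + 1) * m := by ring
  rw [hm2, hm3] at hmain
  have hfin : (b' + 1) * Cu.card ≤ (b' + 1) * m := by linarith
  have := Nat.le_of_mul_le_mul_left hfin (by omega : 0 < b' + 1)
  omega

lemma down_card (G : SimpleGraph V) [DecidableRel G.Adj] {a b : ℕ}
    (hconn : G.Connected)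
    (ha : ∀ x y, G.Adj x y → (G.neighborFinset x ∩ G.neighborFinset y).card = a)
    (hbeta : ∀ x y, G.dist x y = 2 → (G.neighborFinset x ∩ G.neighborFinset y).card = b)
    (hb2 : 2 ≤ b) (hab : a ≤ b)
    (hstep : ∀ {x u v : V}, G.Adj u v → 1 ≤ G.dist x u → G.dist x v = G.dist x u + 1 →
      ((G.neighborFinset u).filter (fun w => G.dist x w + 1 = G.dist x u)).card + 1 ≤
      ((G.neighborFinset v).filter (fun w => G.dist x w + 1 = G.dist x v)).card) :
    ∀ (i : ℕ) (x v : V), G.dist x v = i + 1 →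
      i + 1 ≤ ((G.neighborFinset v).filter (fun w => G.dist x w + 1 = G.dist x v)).card := by
  intro i
  induction i with
  | zero =>
    intro x v hdv
    have hadj : G.Adj x v := SimpleGraph.dist_eq_one_iff_adj.mp hdv
    have hx : x ∈ (G.neighborFinset v).filter (fun w => G.dist x w + 1 = G.dist x v) := by
      rw [mem_filter, mem_neighborFinset]
      refine ⟨hadj.symm, ?_⟩
      rw [SimpleGraph.dist_self, hdv]
    exact Finset.card_pos.mpr ⟨x, hx⟩
  | succ i ih =>
    intro x v hdv
    obtain ⟨p, hp⟩ := (hconn v x).exists_walk_length_eq_dist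
    rw [SimpleGraph.dist_comm, hdv] at hp
    cases p with
    | nil => simp at hp
    | cons hadj q =>
      rename_i u
      -- hadj : G.Adj v u, q : G.Walk u x
      have hqlen : q.length = i + 1 := by
        simp [Walk.length_cons] at hp
        omega
      have hdxu_le : G.dist x u ≤ i + 1 := by
        have := G.dist_le q.reverse
        rw [Walk.length_reverse, hqlen] at this
        exact this
      have hdxu_ge : i + 1 ≤ G.dist x u := by
        have h1 : G.dist x v ≤ G.dist x u + G.dist u v := hconn.dist_triangle
        rw [SimpleGraph.dist_eq_one_iff_adj.mpr hadj.symm] at h1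
        omega
      have hdxu : G.dist x u = i + 1 := le_antisymm hdxu_le hdxu_ge
      have h1 := ih x u hdxu
      have h2 := hstep (x := x) hadj.symm (by omega) (by omega)
      omega

/-- A connected amply regular graph with (a) girth 4, or (b) `α ≥ 1` and `α = β - 1`,
or (c) `α = β > 1`, has diameter at most `d`. -/
theorem stmt14 (G : SimpleGraph V) [DecidableRel G.Adj] {n d a b : ℕ}
    (h : G.IsAmplyRegular n d a b) (hconn : G.Connected)
    (hcase : G.girth = 4 ∨ (1 ≤ a ∧ a = b - 1) ∨ (a = b ∧ 1 < b)) :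
    G.diam ≤ d := by
  obtain ⟨hcard, hreg, hA, hB⟩ := h
  have hkey : 2 ≤ b ∧ a ≤ b := by
    rcases hcase with hg | ⟨h1, h2⟩ | ⟨h1, h2⟩
    · exact girth4_facts G hA hB hg
    · constructor <;> omega
    · constructor <;> omega
  obtain ⟨hb2, hab⟩ := hkey
  have hstep : ∀ {x u v : V}, G.Adj u v → 1 ≤ G.dist x u →
      G.dist x v = G.dist x u + 1 →
      ((G.neighborFinset u).filter (fun w => G.dist x w + 1 = G.dist x u)).card + 1 ≤
      ((G.neighborFinset v).filter (fun w => G.dist x w + 1 = G.dist x v)).card :=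
    fun h1 h2 h3 => step_lemma G hconn hA hB hb2 hab h1 h2 h3
  have hdown := down_card G hconn hA hB hb2 hab hstep
  have hdist : ∀ u v : V, G.dist u v ≤ d := by
    intro u v
    by_cases h0 : G.dist u v = 0
    · omega
    · have h1 := hdown (G.dist u v - 1) u v (by omega)
      have h2 : ((G.neighborFinset v).filter
          (fun w => G.dist u w + 1 = G.dist u v)).card ≤ G.degree v := by
        rw [← card_neighborFinset_eq_degree]
        exact card_le_card (filter_subset _ _)
      have h3 := hreg v
      omega
  have hediam : G.ediam ≤ (d : ℕ∞) := by
    apply ediam_le_of_edist_le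
    intro u v
    have hne : G.edist u v ≠ ⊤ := edist_ne_top_iff_reachable.mpr (hconn u v)
    rw [← ENat.coe_toNat hne]
    have heq : G.dist u v = (G.edist u v).toNat := rfl
    exact_mod_cast heq ▸ hdist u v
  calc G.diam = G.ediam.toNat := rfl
    _ ≤ ((d : ℕ∞)).toNat := ENat.toNat_le_toNat hediam (by simp)
    _ = d := by simp
end

section
/- Let G be a strongly regular conference graph with parameters (4γ+1, 2γ, γ−1, γ) for some γ ≥ 2. Then for every edge xy, the Lin-Lu-Yau curvature satisfies κ(x, y) ≥ 1/γ; in particular every conference graph has positive Lin-Lu-Yau curvature on all edges. -/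
open Finset SimpleGraph

variable {V : Type*} [Fintype V] [DecidableEq V]

set_option linter.unusedSectionVars false
set_option maxHeartbeats 1000000

lemma aux_card_common (G : SimpleGraph V) [DecidableRel G.Adj] (v w : V) :
    (G.neighborFinset v ∩ G.neighborFinset w).card = Fintype.card (G.commonNeighbors v w) := by
  rw [← Set.toFinset_card]
  congr 1
  ext u
  simp [SimpleGraph.mem_commonNeighbors]

lemma aux_dist_le_two {G : SimpleGraph V} [DecidableRel G.Adj] {n k l m : ℕ}
    (h : G.IsSRGWith n k l m) (hm : 0 < m) (u v : V) : G.dist u v ≤ 2 := by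
  rcases eq_or_ne u v with rfl | hne
  · simp [SimpleGraph.dist_self]
  rcases em (G.Adj u v) with hadj | hnadj
  · have := SimpleGraph.dist_le (SimpleGraph.Walk.cons hadj SimpleGraph.Walk.nil)
    simp at this; omega
  · have hcard := h.of_not_adj hne hnadj
    have hpos : 0 < Fintype.card (G.commonNeighbors u v) := by omega
    obtain ⟨⟨w, hw⟩⟩ := Fintype.card_pos_iff.mp hpos
    rw [SimpleGraph.mem_commonNeighbors] at hw
    have := SimpleGraph.dist_le
      (SimpleGraph.Walk.cons hw.1 (SimpleGraph.Walk.cons hw.2.symm SimpleGraph.Walk.nil))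
    simpa using this

section Edge

variable {G : SimpleGraph V} [DecidableRel G.Adj] {γ : ℕ} (hγ : 2 ≤ γ)
  (h : G.IsSRGWith (4 * γ + 1) (2 * γ) (γ - 1) γ) {x y : V} (hxy : G.Adj x y)

include hγ h hxy

lemma aux_Dcard : (Dset G x y).card = γ - 1 := by
  rw [Dset, aux_card_common]; exact h.of_adj x y hxy

lemma aux_Ncard : (Nset G x y).card = γ := by
  have hdeg : (G.neighborFinset x).card = 2 * γ := by
    rw [SimpleGraph.card_neighborFinset_eq_degree]; exact h.regular x
  have h1 : (G.neighborFinset x ∩ insert y (G.neighborFinset y)).card + (Nset G x y).card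
      = (G.neighborFinset x).card := Finset.card_inter_add_card_sdiff _ _
  have h2 : G.neighborFinset x ∩ insert y (G.neighborFinset y) = insert y (Dset G x y) := by
    ext u
    simp only [Finset.mem_inter, Finset.mem_insert, SimpleGraph.mem_neighborFinset, Dset]
    constructor
    · rintro ⟨h1, rfl | h2⟩
      · exact Or.inl rfl
      · exact Or.inr ⟨h1, h2⟩
    · rintro (rfl | ⟨h1, h2⟩)
      · exact ⟨hxy, Or.inl rfl⟩
      · exact ⟨h1, Or.inr h2⟩
  have hy : y ∉ Dset G x y := by
    simp [Dset, SimpleGraph.mem_neighborFinset, G.irrefl]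
  rw [h2, Finset.card_insert_of_notMem hy, aux_Dcard hγ h hxy] at h1
  omega

lemma aux_edge : ∃ u₀ ∈ Nset G x y, ∃ v₀ ∈ Nset G y x, G.Adj u₀ v₀ := by
  by_contra hc
  push_neg at hc
  -- every vertex of Nset G x y is adjacent to all of Dset G x y, and symmetrically
  have key : ∀ a b : V, G.Adj a b → (∀ u ∈ Nset G a b, ∀ v ∈ Nset G b a, ¬ G.Adj u v) →
      ∀ u ∈ Nset G a b, ∀ w ∈ Dset G a b, G.Adj u w := by
    intro a b hab hnoedge u hu w hw
    have hu' := hu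
    simp only [Nset, Finset.mem_sdiff, Finset.mem_insert, SimpleGraph.mem_neighborFinset,
      not_or] at hu'
    obtain ⟨hau, hub, hbu⟩ := hu'
    have hC : (G.neighborFinset u ∩ G.neighborFinset b).card = γ := by
      rw [aux_card_common]
      exact h.of_not_adj hub (fun hadj => hbu hadj.symm)
    have hsub : G.neighborFinset u ∩ G.neighborFinset b ⊆ insert a (Dset G a b) := by
      intro z hz
      simp only [Finset.mem_inter, SimpleGraph.mem_neighborFinset] at hz
      obtain ⟨huz, hbz⟩ := hz
      rcases eq_or_ne z a with rfl | hza
      · exact Finset.mem_insert_self _ _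
      · rcases em (G.Adj a z) with haz | hnaz
        · exact Finset.mem_insert_of_mem (by
            simp [Dset, SimpleGraph.mem_neighborFinset, haz, hbz])
        · exfalso
          have hzN : z ∈ Nset G b a := by
            simp [Nset, SimpleGraph.mem_neighborFinset, hbz, hza,
              fun hadj : G.Adj a z => hnaz hadj]
          exact hnoedge u hu z hzN huz
    have hacard : (insert a (Dset G a b)).card = γ := by
      have ha : a ∉ Dset G a b := by
        simp [Dset, SimpleGraph.mem_neighborFinset, G.irrefl]
      rw [Finset.card_insert_of_notMem ha, aux_Dcard hγ h hab]
      omega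
    have heq : G.neighborFinset u ∩ G.neighborFinset b = insert a (Dset G a b) :=
      Finset.eq_of_subset_of_card_le hsub (by rw [hacard, hC])
    have hwmem : w ∈ G.neighborFinset u ∩ G.neighborFinset b := by
      rw [heq]
      exact Finset.mem_insert_of_mem hw
    simp only [Finset.mem_inter, SimpleGraph.mem_neighborFinset] at hwmem
    exact hwmem.1
  -- pick w ∈ Dset
  have hD : 0 < (Dset G x y).card := by rw [aux_Dcard hγ h hxy]; omega
  obtain ⟨w, hw⟩ := Finset.card_pos.mp hD
  have hDsymm : Dset G x y = Dset G y x := by rw [Dset, Dset, Finset.inter_comm]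
  have hc' : ∀ u ∈ Nset G y x, ∀ v ∈ Nset G x y, ¬ G.Adj u v := by
    intro u hu v hv hadj
    exact hc v hv u hu hadj.symm
  have hNx : ∀ u ∈ Nset G x y, G.Adj w u := fun u hu => (key x y hxy hc u hu w hw).symm
  have hNy : ∀ u ∈ Nset G y x, G.Adj w u := fun u hu =>
    (key y x hxy.symm hc' u hu w (hDsymm ▸ hw)).symm
  -- now Γ(w) ⊇ {x, y} ∪ Nx ∪ Ny which has 2γ+2 elements
  have hwx : G.Adj w x := by
    simp only [Dset, Finset.mem_inter, SimpleGraph.mem_neighborFinset] at hw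
    exact hw.1.symm
  have hwy : G.Adj w y := by
    simp only [Dset, Finset.mem_inter, SimpleGraph.mem_neighborFinset] at hw
    exact hw.2.symm
  have hsub : insert x (insert y (Nset G x y ∪ Nset G y x)) ⊆ G.neighborFinset w := by
    intro z hz
    simp only [Finset.mem_insert, Finset.mem_union] at hz
    rw [SimpleGraph.mem_neighborFinset]
    rcases hz with rfl | rfl | hz | hz
    · exact hwx
    · exact hwy
    · exact hNx z hz
    · exact hNy z hz
  have hcard : (insert x (insert y (Nset G x y ∪ Nset G y x))).card = 2 * γ + 2 := by
    have hdisj : Disjoint (Nset G x y) (Nset G y x) := by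
      rw [Finset.disjoint_left]
      intro z hz1 hz2
      simp only [Nset, Finset.mem_sdiff, Finset.mem_insert, SimpleGraph.mem_neighborFinset,
        not_or] at hz1 hz2
      exact hz1.2.2 hz2.1
    have hxmem : x ∉ insert y (Nset G x y ∪ Nset G y x) := by
      intro hx
      rcases Finset.mem_insert.mp hx with rfl | hx'
      · exact G.irrefl hxy
      rcases Finset.mem_union.mp hx' with hx2 | hx2
      · exact G.notMem_neighborFinset_self x ((Finset.mem_sdiff.mp hx2).1)
      · exact (Finset.mem_sdiff.mp hx2).2 (Finset.mem_insert_self _ _)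
    have hymem : y ∉ Nset G x y ∪ Nset G y x := by
      intro hy
      rcases Finset.mem_union.mp hy with hy2 | hy2
      · exact (Finset.mem_sdiff.mp hy2).2 (Finset.mem_insert_self _ _)
      · exact G.notMem_neighborFinset_self y ((Finset.mem_sdiff.mp hy2).1)
    rw [Finset.card_insert_of_notMem hxmem, Finset.card_insert_of_notMem hymem,
      Finset.card_union_of_disjoint hdisj, aux_Ncard hγ h hxy, aux_Ncard hγ h hxy.symm]
    omega
  have hle := Finset.card_le_card hsub
  rw [hcard, SimpleGraph.card_neighborFinset_eq_degree, h.regular w] at hle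
  omega

end Edge


/-- Every edge of a conference graph with parameters `(4γ+1, 2γ, γ-1, γ)`, `γ ≥ 2`, has
Lin-Lu-Yau curvature at least `1/γ`; in particular the curvature is positive. -/
theorem stmt15 (G : SimpleGraph V) [DecidableRel G.Adj] {γ : ℕ} (hγ : 2 ≤ γ)
    (h : G.IsSRGWith (4 * γ + 1) (2 * γ) (γ - 1) γ)
    (x y : V) (hxy : G.Adj x y) :
    (1 : ℝ) / γ ≤ kappaLLY G (2 * γ) x y ∧ 0 < kappaLLY G (2 * γ) x y := by
  classical
  have hγ1 : (1:ℝ) ≤ (γ:ℝ) := by exact_mod_cast le_trans one_le_two hγ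
  have hγpos : (0:ℝ) < (γ:ℝ) := by linarith
  set d : ℕ := 2 * γ with hd
  have hdc : ((d:ℕ):ℝ) = 2*(γ:ℝ) := by rw [hd]; push_cast; ring
  set p : ℝ := 1 / ((d:ℝ) + 1) with hp
  have hne1 : 2*(γ:ℝ) ≠ 0 := by positivity
  have hne2 : 2*(γ:ℝ)+1 ≠ 0 := by positivity
  have hpm : p = 1/(2*(γ:ℝ)+1) := by rw [hp, hdc]
  have hppos : 0 < p := by rw [hpm]; positivity
  set Bx := insert x (G.neighborFinset x) with hBx
  set By := insert y (G.neighborFinset y) with hBy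
  have hxny : x ≠ y := G.ne_of_adj hxy
  -- characterization of the measures
  have hmu : ∀ z a : V, muMeasure G p z a
      = if a ∈ insert z (G.neighborFinset z) then p else 0 := by
    intro z a
    have hdz : (G.degree z : ℝ) = 2*(γ:ℝ) := by rw [h.regular z]; exact hdc
    simp only [muMeasure, Finset.mem_insert, SimpleGraph.mem_neighborFinset]
    by_cases h1 : a = z
    · simp [h1]
    · by_cases h2 : G.Adj z a
      · rw [if_neg h1, if_pos h2, if_pos (Or.inr h2), hdz, hpm]
        field_simp
        ring
      · simp [h1, h2]
  -- the special edge between the two private neighborhoods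
  obtain ⟨u₀, hu₀, v₀, hv₀, huv⟩ := aux_edge hγ h hxy
  have hNxcard : (Nset G x y).card = γ := aux_Ncard hγ h hxy
  have hNycard : (Nset G y x).card = γ := aux_Ncard hγ h hxy.symm
  have hcards : Fintype.card ((Nset G x y).erase u₀ : Finset V)
      = Fintype.card ((Nset G y x).erase v₀ : Finset V) := by
    rw [Fintype.card_coe, Fintype.card_coe, Finset.card_erase_of_mem hu₀,
      Finset.card_erase_of_mem hv₀, hNxcard, hNycard]
  set g := Fintype.equivOfCardEq hcards with hg
  set T : V → V := fun v =>
    if hv : v ∈ (Nset G x y).erase u₀ then (g ⟨v, hv⟩ : V)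
    else if v = u₀ then v₀ else v with hTdef
  have hg_mem : ∀ (a : V) (ha : a ∈ (Nset G x y).erase u₀),
      (g ⟨a, ha⟩ : V) ∈ (Nset G y x).erase v₀ := fun a ha => (g ⟨a, ha⟩).2
  have hTval : ∀ v (hv : v ∈ (Nset G x y).erase u₀), T v = (g ⟨v, hv⟩ : V) := by
    intro v hv; simp only [hTdef]; exact dif_pos hv
  have hTu₀ : T u₀ = v₀ := by
    simp only [hTdef]; rw [dif_neg (Finset.notMem_erase u₀ _)]; exact if_pos trivial
  have hTmem : ∀ v ∈ Nset G x y, T v ∈ Nset G y x := by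
    intro v hv
    by_cases he : v ∈ (Nset G x y).erase u₀
    · rw [hTval v he]; exact Finset.mem_of_mem_erase (hg_mem v he)
    · have hv0 : v = u₀ := by
        by_contra hne; exact he (Finset.mem_erase.mpr ⟨hne, hv⟩)
      rw [hv0, hTu₀]; exact hv₀
  have hTid : ∀ v, v ∉ Nset G x y → T v = v := by
    intro v hv
    have h1 : v ∉ (Nset G x y).erase u₀ := fun hc => hv (Finset.mem_of_mem_erase hc)
    have h2 : v ≠ u₀ := fun hc => hv (hc ▸ hu₀)
    simp only [hTdef]; rw [dif_neg h1]; exact if_neg h2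
  have hTinjNx : ∀ a ∈ Nset G x y, ∀ b ∈ Nset G x y, T a = T b → a = b := by
    intro a ha b hb hab
    by_cases hae : a ∈ (Nset G x y).erase u₀ <;>
      by_cases hbe : b ∈ (Nset G x y).erase u₀
    · rw [hTval a hae, hTval b hbe] at hab
      have h1 := g.injective (Subtype.ext hab)
      exact Subtype.ext_iff.mp h1
    · have hb0 : b = u₀ := by
        by_contra hne; exact hbe (Finset.mem_erase.mpr ⟨hne, hb⟩)
      exfalso
      rw [hTval a hae, hb0, hTu₀] at hab
      have hmem := hg_mem a hae
      rw [hab] at hmem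
      exact (Finset.notMem_erase v₀ _) hmem
    · have ha0 : a = u₀ := by
        by_contra hne; exact hae (Finset.mem_erase.mpr ⟨hne, ha⟩)
      exfalso
      rw [hTval b hbe, ha0, hTu₀] at hab
      have hmem := hg_mem b hbe
      rw [← hab] at hmem
      exact (Finset.notMem_erase v₀ _) hmem
    · have ha0 : a = u₀ := by
        by_contra hne; exact hae (Finset.mem_erase.mpr ⟨hne, ha⟩)
      have hb0 : b = u₀ := by
        by_contra hne; exact hbe (Finset.mem_erase.mpr ⟨hne, hb⟩)
      rw [ha0, hb0]
  have hNyBx : ∀ v ∈ Nset G y x, v ∉ Bx := by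
    intro v hv
    rw [Nset, Finset.mem_sdiff] at hv
    rw [hBx]; exact hv.2
  have hTinj : ∀ a ∈ Bx, ∀ b ∈ Bx, T a = T b → a = b := by
    intro a ha b hb hab
    by_cases hna : a ∈ Nset G x y <;> by_cases hnb : b ∈ Nset G x y
    · exact hTinjNx a hna b hnb hab
    · exfalso
      rw [hTid b hnb] at hab
      exact hNyBx b (hab ▸ hTmem a hna) hb
    · exfalso
      rw [hTid a hna] at hab
      exact hNyBx a (by rw [hab]; exact hTmem b hnb) ha
    · rw [hTid a hna, hTid b hnb] at hab; exact hab
  have hNysubBy : ∀ v ∈ Nset G y x, v ∈ By := by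
    intro v hv
    rw [Nset, Finset.mem_sdiff] at hv
    rw [hBy]; exact Finset.mem_insert_of_mem hv.1
  have hTBx : ∀ a ∈ Bx, T a ∈ By := by
    intro a ha
    by_cases hn : a ∈ Nset G x y
    · exact hNysubBy _ (hTmem a hn)
    · rw [hTid a hn]
      rw [hBx, Finset.mem_insert] at ha
      rcases ha with rfl | ha
      · rw [hBy]
        exact Finset.mem_insert_of_mem (by rw [SimpleGraph.mem_neighborFinset]; exact hxy.symm)
      · rw [Nset, Finset.mem_sdiff] at hn
        push_neg at hn
        rw [hBy]; exact hn ha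
  have hBxcard : Bx.card = 2*γ+1 := by
    rw [hBx, Finset.card_insert_of_notMem (G.notMem_neighborFinset_self x),
      SimpleGraph.card_neighborFinset_eq_degree, h.regular x]
  have hBycard : By.card = 2*γ+1 := by
    rw [hBy, Finset.card_insert_of_notMem (G.notMem_neighborFinset_self y),
      SimpleGraph.card_neighborFinset_eq_degree, h.regular y]
  have himg : Finset.image T Bx = By := by
    apply Finset.eq_of_subset_of_card_le
    · intro b hb
      obtain ⟨a, ha, rfl⟩ := Finset.mem_image.mp hb
      exact hTBx a ha
    · rw [Finset.card_image_of_injOn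
        (fun a ha b hb hab => hTinj a (Finset.mem_coe.mp ha) b (Finset.mem_coe.mp hb) hab),
        hBxcard, hBycard]
  have hcol : ∀ b, (Bx.filter (fun a => T a = b)).card = if b ∈ By then 1 else 0 := by
    intro b
    by_cases hb : b ∈ By
    · rw [if_pos hb]
      obtain ⟨a, ha, hab⟩ := Finset.mem_image.mp (himg ▸ hb)
      rw [Finset.card_eq_one]
      refine ⟨a, ?_⟩
      ext c
      simp only [Finset.mem_filter, Finset.mem_singleton]
      constructor
      · rintro ⟨hc, hcb⟩
        exact hTinj c hc a ha (hcb.trans hab.symm)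
      · rintro rfl
        exact ⟨ha, hab⟩
    · rw [if_neg hb, Finset.card_eq_zero, Finset.filter_eq_empty_iff]
      intro a ha hab
      exact hb (hab ▸ hTBx a ha)
  -- the transport plan
  set piT : V → V → ℝ := fun a b => if a ∈ Bx ∧ T a = b then p else 0 with hpiT
  have hpiT_nonneg : ∀ a b, 0 ≤ piT a b := by
    intro a b
    simp only [hpiT]
    split
    · exact le_of_lt hppos
    · exact le_refl 0
  have hrow : ∀ a, ∑ b, piT a b = muMeasure G p x a := by
    intro a
    rw [hmu x a, ← hBx]
    by_cases ha : a ∈ Bx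
    · rw [if_pos ha]
      have heach : ∀ b, piT a b = if T a = b then p else 0 := by
        intro b; simp only [hpiT, ha, true_and]
      rw [Finset.sum_congr rfl (fun b _ => heach b), Finset.sum_ite_eq]
      simp
    · rw [if_neg ha]
      apply Finset.sum_eq_zero
      intro b _
      simp only [hpiT, ha, false_and, if_false]
  have hcolsum : ∀ b, ∑ a, piT a b = muMeasure G p y b := by
    intro b
    rw [hmu y b, ← hBy]
    have h1 : ∑ a, piT a b = ∑ a ∈ Finset.univ.filter (fun a => a ∈ Bx ∧ T a = b), p := by
      rw [Finset.sum_filter]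
    have h2 : Finset.univ.filter (fun a => a ∈ Bx ∧ T a = b)
        = Bx.filter (fun a => T a = b) := by
      ext a
      simp [Finset.mem_filter]
    rw [h1, h2, Finset.sum_const, hcol b]
    split
    · simp
    · simp
  have hplan : IsTransportPlan (muMeasure G p x) (muMeasure G p y) piT :=
    ⟨hpiT_nonneg, hrow, hcolsum⟩
  -- cost of the plan
  set c : ℝ := ∑ u, ∑ v, (G.dist u v : ℝ) * piT u v with hcdef
  have hcost : c ≤ (2*(γ:ℝ)-1) * p := by
    have hinner : ∀ a, ∑ b, (G.dist a b : ℝ) * piT a b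
        = if a ∈ Bx then (G.dist a (T a) : ℝ) * p else 0 := by
      intro a
      by_cases ha : a ∈ Bx
      · rw [if_pos ha, Finset.sum_eq_single_of_mem (T a) (Finset.mem_univ _)]
        · have hpv : piT a (T a) = p := by simp [hpiT, ha]
          rw [hpv]
        · intro b _ hb
          simp only [hpiT]
          rw [if_neg (fun hcon => hb hcon.2.symm)]
          ring
      · rw [if_neg ha]
        apply Finset.sum_eq_zero
        intro b _
        simp only [hpiT]
        rw [if_neg (fun hcon => ha hcon.1)]
        ring
    rw [hcdef, Finset.sum_congr rfl (fun a _ => hinner a), Finset.sum_ite_mem,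
      Finset.univ_inter]
    have hsub : Nset G x y ⊆ Bx := by
      intro a ha
      rw [hBx]
      exact Finset.mem_insert_of_mem ((Finset.mem_sdiff.mp ha).1)
    rw [← Finset.sum_subset hsub (fun a _ hna => by
      rw [hTid a hna, SimpleGraph.dist_self]; simp)]
    rw [← Finset.add_sum_erase _ _ hu₀]
    have hterm1 : (G.dist u₀ (T u₀) : ℝ) * p ≤ 1 * p := by
      rw [hTu₀]
      have hd1 : G.dist u₀ v₀ ≤ 1 := by
        have := SimpleGraph.dist_le (SimpleGraph.Walk.cons huv SimpleGraph.Walk.nil)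
        simpa using this
      have h1 : (G.dist u₀ v₀ : ℝ) ≤ 1 := by exact_mod_cast hd1
      nlinarith [hppos]
    have hterm2 : ∑ a ∈ (Nset G x y).erase u₀, (G.dist a (T a) : ℝ) * p
        ≤ ((Nset G x y).erase u₀).card • (2 * p) := by
      apply Finset.sum_le_card_nsmul
      intro a _
      have hd2 : G.dist a (T a) ≤ 2 := aux_dist_le_two h (by omega) a (T a)
      have h1 : (G.dist a (T a) : ℝ) ≤ 2 := by exact_mod_cast hd2
      nlinarith [hppos]
    have hcard' : ((((Nset G x y).erase u₀).card : ℕ) : ℝ) = (γ:ℝ) - 1 := by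
      rw [Finset.card_erase_of_mem hu₀, hNxcard,
        Nat.cast_sub (by omega : 1 ≤ γ)]
      push_cast
      ring
    calc _ ≤ 1*p + ((Nset G x y).erase u₀).card • (2*p) := add_le_add hterm1 hterm2
      _ = (2*(γ:ℝ)-1)*p := by rw [nsmul_eq_mul, hcard']; ring
  -- bound on W1
  have hbdd : BddBelow {c : ℝ | ∃ pi, IsTransportPlan (muMeasure G p x) (muMeasure G p y) pi ∧
      c = ∑ u, ∑ v, (G.dist u v : ℝ) * pi u v} := by
    refine ⟨0, ?_⟩
    rintro z ⟨pi, hpi, rfl⟩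
    apply Finset.sum_nonneg
    intro u _
    apply Finset.sum_nonneg
    intro v _
    exact mul_nonneg (Nat.cast_nonneg _) (hpi.1 u v)
  have hmemS : c ∈ {c : ℝ | ∃ pi, IsTransportPlan (muMeasure G p x) (muMeasure G p y) pi ∧
      c = ∑ u, ∑ v, (G.dist u v : ℝ) * pi u v} := ⟨piT, hplan, hcdef⟩
  have hW1 : W1 G (muMeasure G p x) (muMeasure G p y) ≤ (2*(γ:ℝ)-1)*p := by
    rw [W1]
    exact le_trans (csInf_le hbdd hmemS) hcost
  -- final computation
  have hκ : (1:ℝ)/γ ≤ kappaLLY G d x y := by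
    unfold kappaLLY
    rw [← hp]
    have h2m : 2*p ≤ 1 - W1 G (muMeasure G p x) (muMeasure G p y) := by
      have heq : (2*(γ:ℝ)-1)*p = 1 - 2*p := by
        rw [hpm]
        field_simp
        ring
      linarith [hW1]
    have hcoef : (0:ℝ) < ((d:ℝ)+1)/(d:ℝ) := by rw [hdc]; positivity
    calc (1:ℝ)/γ = (((d:ℝ)+1)/(d:ℝ)) * (2*p) := by
          rw [hdc, hpm]
          field_simp
      _ ≤ _ := mul_le_mul_of_nonneg_left h2m (le_of_lt hcoef)
  exact ⟨hκ, lt_of_lt_of_le (by positivity) hκ⟩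
end

section
/- Let G = (V,E) be a d-regular graph and xy ∈ E. Then the Lin-Lu-Yau curvature satisfies κ(x,y) = ((d+1)/d)·κ_{1/(d+1)}(x,y), where κ_p(x,y) = 1 − W₁(μ_x^p, μ_y^p). -/
/-!
For `p₀ ≤ p < 1` the measure `μ_x^p` is the mixture `t • μ_x^{p₀} + (1 - t) • δ_x` with
`t = (1 - p) / (1 - p₀)`. Gluing an optimal plan for `p₀` with `δ_x ⊗ δ_y` gives
`W₁(μ_x^p, μ_y^p) ≤ t • W₁(μ_x^{p₀}, μ_y^{p₀}) + (1 - t)`. Conversely, when `p₀ ≥ 1/(d+1)` some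
optimal plan for `p` moves mass at least `1 - t` from `x` to `y`, and removing it leaves a plan
for `p₀`. Such a plan is an optimal one maximising `π x y + ∑ w, π w w`: if it moved less,
exchanging mass along a 2-cycle (through a common neighbour of `x` and `y` if need be) would
keep the cost and increase this objective. So `κ_p / (1 - p)` is constant on `[1/(d+1), 1)`.
-/

open Finset SimpleGraph

variable {V : Type*} [Fintype V] [DecidableEq V]

/-- `κ_p(x,y) = 1 - W₁(μ_x^p, μ_y^p)/d(x,y)`. -/
noncomputable def kappaP (G : SimpleGraph V) [DecidableRel G.Adj] (p : ℝ) (x y : V) :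
    ℝ :=
  1 - W1 G (muMeasure G p x) (muMeasure G p y) / (G.dist x y : ℝ)


theorem exists_notMem_pos_of_sum_lt {f : V → ℝ} {s : Finset V}
    (h : ∑ v ∈ s, f v < ∑ v, f v) : ∃ v ∉ s, 0 < f v := by
  have : ∑ _v ∈ univ \ s, (0 : ℝ) < ∑ v ∈ univ \ s, f v := by
    rw [sum_const_zero]; linarith [sum_sdiff (subset_univ s) (f := f)]
  obtain ⟨v, hv, hpos⟩ := exists_lt_of_sum_lt this
  exact ⟨v, (mem_sdiff.1 hv).2, hpos⟩

section TransportPlan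

omit [DecidableEq V]

variable {μ₁ μ₂ ν₁ ν₂ : V → ℝ} {π σ : V → V → ℝ}

def transportCost (c : V → V → ℝ) (π : V → V → ℝ) : ℝ :=
  ∑ u, ∑ v, c u v * π u v

theorem IsTransportPlan.le_left (hπ : IsTransportPlan μ₁ μ₂ π) (u v : V) : π u v ≤ μ₁ u :=
  hπ.2.1 u ▸ single_le_sum (fun w _ => hπ.1 u w) (mem_univ v)

theorem IsTransportPlan.le_right (hπ : IsTransportPlan μ₁ μ₂ π) (u v : V) : π u v ≤ μ₂ v :=
  hπ.2.2 v ▸ single_le_sum (fun w _ => hπ.1 w v) (mem_univ u)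

theorem isTransportPlan_mul (h₁ : ∀ u, 0 ≤ μ₁ u) (h₂ : ∀ v, 0 ≤ μ₂ v)
    (s₁ : ∑ u, μ₁ u = 1) (s₂ : ∑ v, μ₂ v = 1) :
    IsTransportPlan μ₁ μ₂ (fun u v => μ₁ u * μ₂ v) :=
  ⟨fun u v => mul_nonneg (h₁ u) (h₂ v), fun u => by rw [← mul_sum, s₂, mul_one],
    fun v => by rw [← sum_mul, s₁, one_mul]⟩

theorem IsTransportPlan.linearCombination (hπ : IsTransportPlan μ₁ μ₂ π)
    (hσ : IsTransportPlan ν₁ ν₂ σ) {α β : ℝ} (h : ∀ u v, 0 ≤ α * π u v + β * σ u v) :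
    IsTransportPlan (α • μ₁ + β • ν₁) (α • μ₂ + β • ν₂) (α • π + β • σ) := by
  refine ⟨h, fun u => ?_, fun v => ?_⟩
  · simp [sum_add_distrib, ← mul_sum, hπ.2.1 u, hσ.2.1 u]
  · simp [sum_add_distrib, ← mul_sum, hπ.2.2 v, hσ.2.2 v]

theorem transportCost_linearCombination (c : V → V → ℝ) (α β : ℝ) :
    transportCost c (α • π + β • σ) = α * transportCost c π + β * transportCost c σ := by
  simp only [transportCost, mul_sum, ← sum_add_distrib, Pi.add_apply, Pi.smul_apply, smul_eq_mul]
  exact sum_congr rfl fun u _ => sum_congr rfl fun v _ => by ring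

theorem continuous_transportCost (c : V → V → ℝ) : Continuous (transportCost c) := by
  unfold transportCost; fun_prop

theorem isCompact_setOf_isTransportPlan (μ₁ μ₂ : V → ℝ) :
    IsCompact {π : V → V → ℝ | IsTransportPlan μ₁ μ₂ π} := by
  have hclosed : IsClosed {π : V → V → ℝ | IsTransportPlan μ₁ μ₂ π} := by
    simp only [IsTransportPlan, Set.ofPred_and, Set.ofPred_forall]
    refine .inter (isClosed_iInter fun u => isClosed_iInter fun v => isClosed_le ?_ ?_)
      (.inter (isClosed_iInter fun u => isClosed_eq ?_ ?_)
        (isClosed_iInter fun v => isClosed_eq ?_ ?_)) <;> fun_prop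
  exact isCompact_Icc.of_isClosed_subset hclosed
    fun π hπ => ⟨fun u v => hπ.1 u v, fun u v => hπ.le_left u v⟩

def IsOptimalPlan (c : V → V → ℝ) (μ₁ μ₂ : V → ℝ) (π : V → V → ℝ) : Prop :=
  IsTransportPlan μ₁ μ₂ π ∧
    ∀ π', IsTransportPlan μ₁ μ₂ π' → transportCost c π ≤ transportCost c π'

def IsLexOptimalPlan (c : V → V → ℝ) (F : (V → V → ℝ) → ℝ) (μ₁ μ₂ : V → ℝ)
    (π : V → V → ℝ) : Prop :=
  IsOptimalPlan c μ₁ μ₂ π ∧ ∀ π', IsOptimalPlan c μ₁ μ₂ π' → F π' ≤ F π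

theorem exists_isOptimalPlan (c : V → V → ℝ) (h : ∃ π, IsTransportPlan μ₁ μ₂ π) :
    ∃ π, IsOptimalPlan c μ₁ μ₂ π :=
  let ⟨π, hπ, hmin⟩ := (isCompact_setOf_isTransportPlan μ₁ μ₂).exists_isMinOn h
    (continuous_transportCost c).continuousOn
  ⟨π, hπ, fun _ hπ' => hmin hπ'⟩

theorem exists_isLexOptimalPlan (c : V → V → ℝ) {F : (V → V → ℝ) → ℝ} (hF : Continuous F)
    (h : ∃ π, IsTransportPlan μ₁ μ₂ π) : ∃ π, IsLexOptimalPlan c F μ₁ μ₂ π := by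
  obtain ⟨π₀, hπ₀⟩ := exists_isOptimalPlan c h
  have hopt : {π | IsOptimalPlan c μ₁ μ₂ π} =
      {π | IsTransportPlan μ₁ μ₂ π} ∩ transportCost c ⁻¹' {transportCost c π₀} := by
    ext π
    refine ⟨fun hπ => ⟨hπ.1, le_antisymm (hπ.2 π₀ hπ₀.1) (hπ₀.2 π hπ.1)⟩,
      fun hπ => ⟨hπ.1, fun π' hπ' => hπ.2.symm ▸ hπ₀.2 π' hπ'⟩⟩
  have hcompact : IsCompact {π | IsOptimalPlan c μ₁ μ₂ π} := hopt ▸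
    (isCompact_setOf_isTransportPlan μ₁ μ₂).inter_right
      (isClosed_singleton.preimage (continuous_transportCost c))
  obtain ⟨π, hπ, hmax⟩ := hcompact.exists_isMaxOn ⟨π₀, hπ₀⟩ hF.continuousOn
  exact ⟨π, hπ, fun _ hπ' => hmax hπ'⟩

noncomputable def distCost (G : SimpleGraph V) : V → V → ℝ := fun u v => G.dist u v

theorem W1_le_transportCost (G : SimpleGraph V) (hπ : IsTransportPlan μ₁ μ₂ π) :
    W1 G μ₁ μ₂ ≤ transportCost (distCost G) π := by
  refine csInf_le ⟨0, ?_⟩ ⟨π, hπ, rfl⟩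
  rintro _ ⟨π', hπ', rfl⟩
  exact sum_nonneg fun u _ => sum_nonneg fun v _ => mul_nonneg (Nat.cast_nonneg _) (hπ'.1 u v)

theorem IsOptimalPlan.W1_eq {G : SimpleGraph V} (hπ : IsOptimalPlan (distCost G) μ₁ μ₂ π) :
    W1 G μ₁ μ₂ = transportCost (distCost G) π := by
  refine IsLeast.csInf_eq ⟨⟨π, hπ.1, rfl⟩, ?_⟩
  rintro _ ⟨π', hπ', rfl⟩
  exact hπ.2 π' hπ'

def stayObjective (x y : V) (π : V → V → ℝ) : ℝ := π x y + ∑ w, π w w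

theorem continuous_stayObjective (x y : V) : Continuous (stayObjective (V := V) x y) := by
  unfold stayObjective; fun_prop

end TransportPlan

section Swap

variable {μ₁ μ₂ : V → ℝ} {π : V → V → ℝ}

def dirac (a : V) : V → ℝ := fun u => if u = a then 1 else 0

theorem transportCost_dirac_mul_dirac (c : V → V → ℝ) (a b : V) :
    transportCost c (fun u v => dirac a u * dirac b v) = c a b := by
  simp [transportCost, dirac]

theorem sum_dirac_sub_dirac_mul (a a' : V) (f : V → ℝ) :
    ∑ u, (dirac a u - dirac a' u) * f u = f a - f a' := by
  simp [dirac, sub_mul, sum_sub_distrib]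

/-- Moves mass `ε` from `(a, b')` and `(a', b)` to `(a, b)` and `(a', b')`. -/
def swapPlan (π : V → V → ℝ) (ε : ℝ) (a a' b b' : V) : V → V → ℝ :=
  fun u v => π u v + ε * ((dirac a u - dirac a' u) * (dirac b v - dirac b' v))

theorem IsTransportPlan.swap (hπ : IsTransportPlan μ₁ μ₂ π) {a a' b b' : V} (ha : a ≠ a')
    (hb : b ≠ b') {ε : ℝ} (hε : 0 ≤ ε) (h₁ : ε ≤ π a b') (h₂ : ε ≤ π a' b) :
    IsTransportPlan μ₁ μ₂ (swapPlan π ε a a' b b') := by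
  refine ⟨fun u v => ?_, fun u => ?_, fun v => ?_⟩
  · have := hπ.1 u v
    by_cases hua : u = a <;> by_cases hua' : u = a' <;> by_cases hvb : v = b <;>
      by_cases hvb' : v = b' <;> simp_all [swapPlan, dirac] <;> linarith
  · simpa [swapPlan, sum_add_distrib, ← mul_sum, dirac] using hπ.2.1 u
  · simp only [swapPlan, sum_add_distrib, mul_left_comm ε, ← sum_mul]
    simpa [dirac] using hπ.2.2 v

theorem transportCost_swapPlan (c : V → V → ℝ) (ε : ℝ) (a a' b b' : V) :
    transportCost c (swapPlan π ε a a' b b') =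
      transportCost c π + ε * (c a b + c a' b' - c a b' - c a' b) := by
  have h : ∀ u v, c u v * (ε * ((dirac a u - dirac a' u) * (dirac b v - dirac b' v))) =
      ε * ((dirac a u - dirac a' u) * ((dirac b v - dirac b' v) * c u v)) := by
    intro u v; ring
  simp only [transportCost, swapPlan, mul_add, sum_add_distrib, h, ← mul_sum,
    sum_dirac_sub_dirac_mul]
  ring

theorem IsLexOptimalPlan.exists_swapPlan_le {c : V → V → ℝ} {F : (V → V → ℝ) → ℝ}
    (hπ : IsLexOptimalPlan c F μ₁ μ₂ π) {a a' b b' : V} (ha : a ≠ a') (hb : b ≠ b')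
    (h₁ : 0 < π a b') (h₂ : 0 < π a' b) (hc : c a b + c a' b' ≤ c a b' + c a' b) :
    ∃ ε > 0, F (swapPlan π ε a a' b b') ≤ F π := by
  refine ⟨min (π a b') (π a' b), lt_min h₁ h₂, hπ.2 _ ⟨?_, fun π' hπ' => ?_⟩⟩
  · exact hπ.1.1.swap ha hb (lt_min h₁ h₂).le (min_le_left _ _) (min_le_right _ _)
  · rw [transportCost_swapPlan]
    nlinarith [hπ.1.2 π' hπ', lt_min h₁ h₂]

theorem stayObjective_swapPlan (x y : V) (ε : ℝ) (a a' b b' : V) :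
    stayObjective x y (swapPlan π ε a a' b b') = stayObjective x y π +
      ε * ((dirac a x - dirac a' x) * (dirac b y - dirac b' y) +
        (dirac b a - dirac b' a) - (dirac b a' - dirac b' a')) := by
  simp only [stayObjective, swapPlan, sum_add_distrib, ← mul_sum, sum_dirac_sub_dirac_mul]
  ring

end Swap

section Idleness

variable {G : SimpleGraph V} [DecidableRel G.Adj] {p : ℝ} {x v : V}

theorem muMeasure_self : muMeasure G p x x = p := by simp [muMeasure]

theorem muMeasure_of_adj (h : G.Adj x v) : muMeasure G p x v = (1 - p) / G.degree x := by
  simp [muMeasure, h, h.ne']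

theorem eq_or_adj_of_muMeasure_ne_zero (h : muMeasure G p x v ≠ 0) : v = x ∨ G.Adj x v := by
  by_contra! hv
  simp [muMeasure, hv.1, hv.2] at h

theorem muMeasure_nonneg (hp₀ : 0 ≤ p) (hp₁ : p ≤ 1) (x v : V) : 0 ≤ muMeasure G p x v := by
  unfold muMeasure
  split_ifs
  exacts [hp₀, div_nonneg (by linarith) (Nat.cast_nonneg _), le_rfl]

theorem sum_muMeasure (hx : G.degree x ≠ 0) : ∑ v, muMeasure G p x v = 1 := by
  have h : ∀ v, muMeasure G p x v =
      (if v = x then p else 0) + if v ∈ G.neighborFinset x then (1 - p) / G.degree x else 0 := by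
    intro v
    by_cases hv : v = x <;> simp [muMeasure, hv]
  simp only [h, sum_add_distrib, sum_ite_eq', sum_ite_mem, univ_inter, sum_const,
    card_neighborFinset_eq_degree, mem_univ, if_true, nsmul_eq_mul]
  field_simp
  ring

theorem muMeasure_eq_smul_add {p₀ : ℝ} (hp₀ : p₀ ≠ 1) (x : V) :
    muMeasure G p x =
      ((1 - p) / (1 - p₀)) • muMeasure G p₀ x + (1 - (1 - p) / (1 - p₀)) • dirac x := by
  have : 1 - p₀ ≠ 0 := sub_ne_zero.2 hp₀.symm
  ext v
  by_cases hv : v = x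
  · subst hv; simp [muMeasure, dirac]; field_simp; ring
  · by_cases h : G.Adj x v
    · simp [muMeasure, dirac, hv, h]; field_simp
    · simp [muMeasure, dirac, hv, h]

end Idleness

section Surgery

variable {μ₁ μ₂ : V → ℝ} {π : V → V → ℝ} {x y u v : V}

theorem IsLexOptimalPlan.cost_add_cost_lt {c : V → V → ℝ}
    (hπ : IsLexOptimalPlan c (stayObjective x y) μ₁ μ₂ π) (hxy : x ≠ y)
    (hux : u ≠ x) (huy : u ≠ y) (hvx : v ≠ x) (hvy : v ≠ y)
    (hπxv : 0 < π x v) (hπuy : 0 < π u y) :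
    c x v + c u y < c x y + c u v := by
  by_contra! h
  obtain ⟨ε, hε, hle⟩ := hπ.exists_swapPlan_le hux.symm hvy.symm hπxv hπuy h
  rw [stayObjective_swapPlan] at hle
  by_cases huv : u = v <;>
    simp [dirac, hxy, huv, hux.symm, hvy.symm, hvx.symm, huy, hvy] at hle <;> linarith

variable {G : SimpleGraph V} [DecidableRel G.Adj] {p : ℝ}

theorem IsTransportPlan.adj_of_pos_left (hπ : IsTransportPlan (muMeasure G p x) μ₂ π)
    (h : 0 < π u v) (hu : u ≠ x) : G.Adj x u :=
  (eq_or_adj_of_muMeasure_ne_zero (h.trans_le (hπ.le_left u v)).ne').resolve_left hu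

theorem IsTransportPlan.adj_of_pos_right (hπ : IsTransportPlan μ₁ (muMeasure G p y) π)
    (h : 0 < π u v) (hv : v ≠ y) : G.Adj y v :=
  (eq_or_adj_of_muMeasure_ne_zero (h.trans_le (hπ.le_right u v)).ne').resolve_left hv

theorem IsLexOptimalPlan.apply_eq_zero_of_adj_of_adj (hdeg : G.degree x = G.degree y)
    (hπ : IsLexOptimalPlan (distCost G) (stayObjective x y) (muMeasure G p x)
      (muMeasure G p y) π)
    (hxv : G.Adj x v) (hyv : G.Adj y v) : π x v = 0 := by
  have hplan := hπ.1.1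
  refine le_antisymm (not_lt.1 fun hpos => ?_) (hplan.1 x v)
  have hcol : π x v + π v v ≤ muMeasure G p y v := by
    rw [← hplan.2.2 v, ← sum_pair (f := fun u => π u v) hxv.ne]
    exact sum_le_univ_sum_of_nonneg fun w => hplan.1 w v
  have hrow : ∑ w, π v w = muMeasure G p y v := by
    rw [hplan.2.1 v, muMeasure_of_adj hxv, muMeasure_of_adj hyv, hdeg]
  obtain ⟨w, hw, hπvw⟩ := exists_notMem_pos_of_sum_lt (s := {v}) (f := π v)
    (by rw [sum_singleton, hrow]; linarith)
  have hwv : w ≠ v := mem_singleton.not.1 hw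
  have hreach : G.Reachable v w := by
    rcases eq_or_ne w y with rfl | hwy
    · exact hyv.symm.reachable
    · exact hyv.symm.reachable.trans (hplan.adj_of_pos_right hπvw hwy).reachable
  have hcost : distCost G x w + distCost G v v ≤ distCost G x v + distCost G v w := by
    simp only [distCost, SimpleGraph.dist_self, CharP.cast_eq_zero, add_zero]
    exact_mod_cast hreach.dist_triangle_right x
  obtain ⟨ε, hε, hle⟩ := hπ.exists_swapPlan_le hxv.ne hwv hpos hπvw hcost
  rw [stayObjective_swapPlan] at hle
  simp [dirac, hxv.ne, hyv.ne, hwv.symm] at hle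
  split_ifs at hle <;> linarith

theorem exists_isOptimalPlan_le_apply (hdeg : G.degree x = G.degree y) (hxy : G.Adj x y)
    (hp₀ : 0 ≤ p) (hp₁ : p ≤ 1) :
    ∃ π, IsOptimalPlan (distCost G) (muMeasure G p x) (muMeasure G p y) π ∧
      p - (1 - p) / G.degree x ≤ π x y := by
  have hx : G.degree x ≠ 0 := ((G.degree_pos_iff_exists_adj x).2 ⟨y, hxy⟩).ne'
  obtain ⟨π, hπ⟩ := exists_isLexOptimalPlan (distCost G) (continuous_stayObjective x y)
    ⟨_, isTransportPlan_mul (muMeasure_nonneg hp₀ hp₁ x) (muMeasure_nonneg hp₀ hp₁ y)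
      (sum_muMeasure hx) (sum_muMeasure (hdeg ▸ hx))⟩
  refine ⟨π, hπ.1, not_lt.1 fun hlt => ?_⟩
  have hplan := hπ.1.1
  have hxx : π x x ≤ (1 - p) / G.degree x := by
    simpa [muMeasure_of_adj hxy.symm, hdeg] using hplan.le_right x x
  have hyy : π y y ≤ (1 - p) / G.degree x := by
    simpa [muMeasure_of_adj hxy] using hplan.le_left y y
  obtain ⟨v, hv, hπxv⟩ := exists_notMem_pos_of_sum_lt (s := {x, y}) (f := π x)
    (by rw [sum_pair hxy.ne, hplan.2.1 x, muMeasure_self]; linarith)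
  obtain ⟨u, hu, hπuy⟩ := exists_notMem_pos_of_sum_lt (s := {x, y}) (f := fun u => π u y)
    (by rw [sum_pair hxy.ne, hplan.2.2 y, muMeasure_self]; linarith)
  simp only [mem_insert, mem_singleton, not_or] at hu hv
  have hyv : G.Adj y v := hplan.adj_of_pos_right hπxv hv.2
  have hxv : G.Adj x v := by
    have hlt' := hπ.cost_add_cost_lt hxy.ne hu.1 hu.2 hv.1 hv.2 hπxv hπuy
    simp only [distCost, dist_eq_one_iff_adj.2 hxy] at hlt'
    have htri := hyv.reachable.dist_triangle_right u
    have hpos := (hxy.reachable.trans hyv.reachable).pos_dist_of_ne (Ne.symm hv.1)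
    rw [dist_eq_one_iff_adj.2 hyv] at htri
    rw [← dist_eq_one_iff_adj]
    have : G.dist x v + G.dist u y < 1 + G.dist u v := by exact_mod_cast hlt'
    omega
  exact hπxv.ne' (hπ.apply_eq_zero_of_adj_of_adj hdeg hxv hyv)

end Surgery

section Wasserstein

variable {G : SimpleGraph V} {μ₁ μ₂ : V → ℝ} {π : V → V → ℝ} {t : ℝ} {x y : V}

theorem isTransportPlan_dirac (x y : V) :
    IsTransportPlan (dirac x) (dirac y) (fun u v => dirac x u * dirac y v) :=
  isTransportPlan_mul (fun _ => by unfold dirac; split_ifs <;> norm_num)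
    (fun _ => by unfold dirac; split_ifs <;> norm_num) (by simp [dirac]) (by simp [dirac])

theorem W1_smul_add_dirac_le (ht₀ : 0 ≤ t) (ht₁ : t ≤ 1)
    (hπ : IsOptimalPlan (distCost G) μ₁ μ₂ π) :
    W1 G (t • μ₁ + (1 - t) • dirac x) (t • μ₂ + (1 - t) • dirac y) ≤
      t * W1 G μ₁ μ₂ + (1 - t) * G.dist x y := by
  have hplan := hπ.1.linearCombination (isTransportPlan_dirac x y) (α := t) (β := 1 - t)
    fun u v => by
      have := hπ.1.1 u v; have := (isTransportPlan_dirac x y).1 u v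
      have : 0 ≤ 1 - t := by linarith
      positivity
  calc _ ≤ _ := W1_le_transportCost G hplan
    _ = _ := by rw [transportCost_linearCombination, transportCost_dirac_mul_dirac, hπ.W1_eq]; rfl

theorem le_W1_smul_add_dirac (ht₀ : 0 < t)
    (hπ : IsOptimalPlan (distCost G) (t • μ₁ + (1 - t) • dirac x) (t • μ₂ + (1 - t) • dirac y) π)
    (hxy : 1 - t ≤ π x y) :
    t * W1 G μ₁ μ₂ + (1 - t) * G.dist x y ≤
      W1 G (t • μ₁ + (1 - t) • dirac x) (t • μ₂ + (1 - t) • dirac y) := by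
  have hplan := hπ.1.linearCombination (isTransportPlan_dirac x y) (α := t⁻¹)
    (β := -(t⁻¹ * (1 - t))) fun u v => by
      rw [neg_mul, ← sub_eq_add_neg, mul_assoc, ← mul_sub]
      refine mul_nonneg (inv_nonneg.2 ht₀.le) ?_
      by_cases h : u = x ∧ v = y
      · simpa [dirac, h.1, h.2] using hxy
      · rw [not_and_or] at h
        rcases h with h | h <;> simpa [dirac, h] using hπ.1.1 u v
  have hmarginal : ∀ (μ : V → ℝ) z,
      t⁻¹ • (t • μ + (1 - t) • dirac z) + -(t⁻¹ * (1 - t)) • dirac z = μ := by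
    intro μ z
    ext v
    simp only [Pi.add_apply, Pi.smul_apply, smul_eq_mul]
    field_simp
    ring
  rw [hmarginal, hmarginal] at hplan
  have hle := W1_le_transportCost G hplan
  rw [transportCost_linearCombination, transportCost_dirac_mul_dirac, ← hπ.W1_eq] at hle
  calc t * W1 G μ₁ μ₂ + (1 - t) * G.dist x y
      ≤ t * (t⁻¹ * W1 G (t • μ₁ + (1 - t) • dirac x) (t • μ₂ + (1 - t) • dirac y) +
          -(t⁻¹ * (1 - t)) * distCost G x y) + (1 - t) * G.dist x y := by gcongr
    _ = _ := by field_simp; simp [distCost]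

end Wasserstein

theorem one_sub_div_one_sub_le {d : ℕ} {p₀ p : ℝ} (hd : (0 : ℝ) < d) (hp₀ : 1 / (d + 1 : ℝ) ≤ p₀)
    (hp₀₁ : p₀ < 1) (hp : p ≤ 1) :
    1 - (1 - p) / (1 - p₀) ≤ p - (1 - p) / d := by
  have : 1 ≤ p₀ * (d + 1) := (div_le_iff₀ (by positivity)).1 hp₀
  have h₁ : (1 - p) * (d + 1) / d ≤ (1 - p) / (1 - p₀) := by
    rw [div_le_div_iff₀ hd (by linarith)]
    nlinarith
  have h₂ : (1 - p) * (d + 1) / d = (1 - p) / d + (1 - p) := by field_simp; ring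
  linarith

section Curvature

variable {G : SimpleGraph V} [DecidableRel G.Adj] {d : ℕ} {x y : V} {p₀ p : ℝ}

theorem W1_muMeasure_eq (hreg : G.IsRegularOfDegree d) (hxy : G.Adj x y)
    (hp₀ : 1 / (d + 1 : ℝ) ≤ p₀) (hp₀p : p₀ ≤ p) (hp : p < 1) :
    W1 G (muMeasure G p x) (muMeasure G p y) =
      (1 - p) / (1 - p₀) * W1 G (muMeasure G p₀ x) (muMeasure G p₀ y) +
        (1 - (1 - p) / (1 - p₀)) := by
  set t := (1 - p) / (1 - p₀)
  have hx : G.degree x ≠ 0 := ((G.degree_pos_iff_exists_adj x).2 ⟨y, hxy⟩).ne'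
  have hy : G.degree y ≠ 0 := ((G.degree_pos_iff_exists_adj y).2 ⟨x, hxy.symm⟩).ne'
  have hd : (0 : ℝ) < d := by rw [← hreg x]; exact_mod_cast Nat.pos_of_ne_zero hx
  have hp₀_nonneg : 0 ≤ p₀ := le_trans (by positivity) hp₀
  have ht₀ : 0 < t := div_pos (by linarith) (by linarith)
  have ht₁ : t ≤ 1 := (div_le_one (by linarith)).2 (by linarith)
  obtain ⟨π₀, hπ₀⟩ := exists_isOptimalPlan (distCost G)
    ⟨_, isTransportPlan_mul (muMeasure_nonneg (G := G) hp₀_nonneg (by linarith) x)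
      (muMeasure_nonneg hp₀_nonneg (by linarith) y) (sum_muMeasure hx) (sum_muMeasure hy)⟩
  obtain ⟨π, hπ, hπxy⟩ := exists_isOptimalPlan_le_apply ((hreg x).trans (hreg y).symm) hxy
    (hp₀_nonneg.trans hp₀p) hp.le
  rw [hreg x] at hπxy
  have hdecomp := fun z => muMeasure_eq_smul_add (G := G) (p := p) (p₀ := p₀) (by linarith) z
  rw [hdecomp x, hdecomp y] at hπ ⊢
  have hdist : (G.dist x y : ℝ) = 1 := by simp [hxy]
  refine le_antisymm ?_ ?_
  · simpa [hdist] using W1_smul_add_dirac_le (x := x) (y := y) ht₀.le ht₁ hπ₀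
  · simpa [hdist] using le_W1_smul_add_dirac ht₀ hπ
      ((one_sub_div_one_sub_le hd hp₀ (by linarith) hp.le).trans hπxy)

theorem kappaP_div_one_sub_eq (hreg : G.IsRegularOfDegree d) (hxy : G.Adj x y)
    (hp₀ : 1 / (d + 1 : ℝ) ≤ p₀) (hp₀p : p₀ ≤ p) (hp : p < 1) :
    kappaP G p x y / (1 - p) = kappaP G p₀ x y / (1 - p₀) := by
  have : 1 - p₀ ≠ 0 := by linarith
  have : 1 - p ≠ 0 := by linarith
  simp only [kappaP, dist_eq_one_iff_adj.2 hxy, Nat.cast_one, div_one,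
    W1_muMeasure_eq hreg hxy hp₀ hp₀p hp]
  field_simp
  ring

end Curvature

/-- The Lin-Lu-Yau curvature `κ(x,y) = lim_{p→1} κ_p(x,y)/(1-p)` of an edge of a
`d`-regular graph equals `((d+1)/d)·κ_{1/(d+1)}(x,y)`. -/
theorem stmt18 (G : SimpleGraph V) [DecidableRel G.Adj] {d : ℕ}
    (hreg : G.IsRegularOfDegree d) (x y : V) (hxy : G.Adj x y) :
    Filter.Tendsto (fun p => kappaP G p x y / (1 - p))
      (nhdsWithin 1 (Set.Iio 1))
      (nhds (((d + 1 : ℝ) / d) * kappaP G (1 / (d + 1 : ℝ)) x y)) := by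
  have hd : (0 : ℝ) < d := by
    rw [← hreg x]; exact_mod_cast (G.degree_pos_iff_exists_adj x).2 ⟨y, hxy⟩
  have hp₀ : 1 / (d + 1 : ℝ) < 1 := by
    rw [div_lt_one (by positivity)]; linarith
  refine tendsto_const_nhds.congr' ?_
  filter_upwards [Ioo_mem_nhdsLT hp₀] with p hp
  have h : 1 - 1 / (d + 1 : ℝ) = d / (d + 1) := by field_simp; ring
  rw [kappaP_div_one_sub_eq hreg hxy le_rfl hp.1.le hp.2, h, div_div_eq_mul_div]
  ring
end
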